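/- arXiv:1704.01545 — 4 statements merged into one kernel-verified Lean document; each statement's English description precedes it below -/
import Mathlib

section
/- Let V(η, ω) = ½ ωᵀJω − ω_s⁻¹ 𝟙ᵀΓ cos η, with J = diag(J_i), J_i > 0, Γ = diag(γ_k), γ_k > 0, ω_s > 0, and let η_s ∈ (−π/2, π/2)^m. Then the Hessian of V at (η_s, 𝟙ω_s) is positive definite, and hence the Bregman-shifted function V_s(x) = V(x) − (x − x̄)ᵀ∇V(x̄) − V(x̄), with x̄ = (η_s, 𝟙ω_s), has a strict local minimum value 0 at x̄ and is positive in a punctured neighborhood of x̄. -/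
/-!
V is a separable sum of one-variable functions, `J i / 2 * ω ^ 2` and `-ωs⁻¹ * γ k * cos η`,
each strictly convex on a neighbourhood of the corresponding coordinate of `x̄` (cos is strictly
concave on `[-π/2, π/2]`). So the Hessian at `x̄` is diagonal with entries `J i > 0` and
`ωs⁻¹ * γ k * cos (ηs k) > 0`, and `Vs` is the sum of the one-variable Bregman divergences
`f (x a) - f (x̄ a) - (x a - x̄ a) * f' (x̄ a)`, which are nonnegative near `x̄` and positive
wherever `x a ≠ x̄ a`.
-/

open Filter Topology

theorem StrictConvexOn.const_mul {S : Set ℝ} {f : ℝ → ℝ} {c : ℝ} (hf : StrictConvexOn ℝ S f)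
    (hc : 0 < c) : StrictConvexOn ℝ S fun x => c * f x := by
  refine ⟨hf.1, fun x hx y hy hxy a b ha hb hab => ?_⟩
  have := mul_lt_mul_of_pos_left (hf.2 hx hy hxy ha hb hab) hc
  simp only [smul_eq_mul] at this ⊢
  linarith

theorem StrictConvexOn.mul_sub_lt_sub {S : Set ℝ} {f : ℝ → ℝ} {x y f' : ℝ}
    (hf : StrictConvexOn ℝ S f) (hx : x ∈ S) (hy : y ∈ S) (hxy : x ≠ y)
    (hf' : HasDerivAt f f' y) : (x - y) * f' < f x - f y := by
  rcases hxy.lt_or_gt with hlt | hgt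
  · have := hf.slope_lt_of_hasDerivAt hx hy hlt hf'
    rw [slope_def_field, div_lt_iff₀ (sub_pos.2 hlt)] at this
    linarith
  · have := hf.lt_slope_of_hasDerivAt hy hx hgt hf'
    rw [slope_def_field, lt_div_iff₀ (sub_pos.2 hgt)] at this
    linarith

section SeparableSum

variable {ι : Type*} [Fintype ι] {f : ι → ℝ → ℝ}

theorem hasFDerivAt_sum_comp_apply {f' : ι → ℝ} {x : ι → ℝ}
    (hf : ∀ a, HasDerivAt (f a) (f' a) (x a)) :
    HasFDerivAt (fun x : ι → ℝ => ∑ a, f a (x a))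
      (∑ a, f' a • ContinuousLinearMap.proj (R := ℝ) (φ := fun _ : ι => ℝ) a) x :=
  HasFDerivAt.fun_sum fun a _ => (hf a).comp_hasFDerivAt x (hasFDerivAt_apply (𝕜 := ℝ) a x)

theorem eventually_pos_sum_bregman {f' y : ι → ℝ} {S : ι → Set ℝ}
    (hfS : ∀ a, StrictConvexOn ℝ (S a) (f a)) (hS : ∀ a, S a ∈ 𝓝 (y a))
    (hf : ∀ a, HasDerivAt (f a) (f' a) (y a)) :
    ∀ᶠ x in 𝓝[≠] y, 0 < ∑ a, (f a (x a) - f a (y a) - (x a - y a) * f' a) := by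
  have hpi : Set.univ.pi S ∈ 𝓝 y := set_pi_mem_nhds Set.finite_univ fun a _ => hS a
  have hterm : ∀ x ∈ Set.univ.pi S, ∀ a, x a ≠ y a →
      0 < f a (x a) - f a (y a) - (x a - y a) * f' a := fun x hx a hxa =>
    sub_pos.2 <| (hfS a).mul_sub_lt_sub (hx a trivial) (mem_of_mem_nhds (hS a)) hxa (hf a)
  filter_upwards [nhdsWithin_le_nhds hpi, self_mem_nhdsWithin] with x hx hxy
  obtain ⟨b, hb⟩ := Function.ne_iff.mp hxy
  refine Finset.sum_pos' (fun a _ => ?_) ⟨b, Finset.mem_univ b, hterm x hx b hb⟩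
  rcases eq_or_ne (x a) (y a) with hxa | hxa
  · simp [hxa]
  · exact (hterm x hx a hxa).le

variable [DecidableEq ι]

theorem fderiv_sum_comp_apply_single {f' : ι → ℝ} {x : ι → ℝ}
    (hf : ∀ a, HasDerivAt (f a) (f' a) (x a)) (b : ι) :
    fderiv ℝ (fun x : ι → ℝ => ∑ a, f a (x a)) x (Pi.single b 1) = f' b := by
  simp [(hasFDerivAt_sum_comp_apply hf).fderiv, Pi.single_apply]

theorem hessian_sum_comp_apply {f' : ι → ℝ → ℝ} {f'' : ι → ℝ} {y : ι → ℝ}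
    (hf : ∀ a t, HasDerivAt (f a) (f' a t) t) (hf' : ∀ a, HasDerivAt (f' a) (f'' a) (y a)) :
    Matrix.of (fun a b => fderiv ℝ (fun x => fderiv ℝ (fun x : ι → ℝ => ∑ a, f a (x a)) x
      (Pi.single b 1)) y (Pi.single a 1)) = Matrix.diagonal f'' := by
  ext a b
  have hb : HasFDerivAt (fun x : ι → ℝ => f' b (x b))
      (f'' b • ContinuousLinearMap.proj (R := ℝ) (φ := fun _ : ι => ℝ) b) y :=
    (hf' b).comp_hasFDerivAt y (hasFDerivAt_apply (𝕜 := ℝ) b y)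
  simp only [Matrix.of_apply, fderiv_sum_comp_apply_single (fun a => hf a _), hb.fderiv]
  rcases eq_or_ne a b with rfl | hab
  · simp
  · simp [hab, Ne.symm hab]

theorem bregman_sum_comp_apply {f' : ι → ℝ} {y : ι → ℝ}
    (hf : ∀ a, HasDerivAt (f a) (f' a) (y a)) (x : ι → ℝ) :
    (∑ a, f a (x a)) - (∑ a, (x a - y a) *
        fderiv ℝ (fun x : ι → ℝ => ∑ a, f a (x a)) y (Pi.single a 1)) - ∑ a, f a (y a)
      = ∑ a, (f a (x a) - f a (y a) - (x a - y a) * f' a) := by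
  simp only [fderiv_sum_comp_apply_single hf, ← Finset.sum_sub_distrib]
  exact Finset.sum_congr rfl fun a _ => by ring

end SeparableSum

open Real in
/-- For V(η, ω) = ½ωᵀJω − ω_s⁻¹𝟙ᵀΓ cos η with η_s ∈ (−π/2, π/2)^m,
the Hessian of V at x̄ = (η_s, 𝟙ω_s) is positive definite, and the Bregman shift
V_s(x) = V(x) − (x − x̄)ᵀ∇V(x̄) − V(x̄) has a strict local minimum value 0 at x̄,
positive in a punctured neighborhood of x̄. -/
theorem stmt5 {n m : ℕ} (J : Fin n → ℝ) (hJ : ∀ i, 0 < J i)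
    (γ : Fin m → ℝ) (hγ : ∀ k, 0 < γ k)
    (ωs : ℝ) (hωs : 0 < ωs)
    (ηs : Fin m → ℝ) (hηs : ∀ k, ηs k ∈ Set.Ioo (-(π / 2)) (π / 2))
    (V : ((Fin m ⊕ Fin n) → ℝ) → ℝ)
    (hV : ∀ x, V x = (1 / 2) * ∑ i, J i * (x (Sum.inr i)) ^ 2
        - ωs⁻¹ * ∑ k, γ k * Real.cos (x (Sum.inl k)))
    (xbar : (Fin m ⊕ Fin n) → ℝ)
    (hxbar : xbar = Sum.elim ηs (fun _ => ωs))
    (Vs : ((Fin m ⊕ Fin n) → ℝ) → ℝ)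
    (hVs : ∀ x, Vs x =
      V x - (∑ a, (x a - xbar a) * fderiv ℝ V xbar (Pi.single a 1)) - V xbar) :
    (Matrix.of fun a b =>
        fderiv ℝ (fun x => fderiv ℝ V x (Pi.single b 1)) xbar (Pi.single a 1)).PosDef ∧
    Vs xbar = 0 ∧ ∀ᶠ x in nhdsWithin xbar {xbar}ᶜ, 0 < Vs x := by
  subst hxbar
  set f : Fin m ⊕ Fin n → ℝ → ℝ :=
    Sum.elim (fun k t => ωs⁻¹ * γ k * -cos t) (fun i t => J i / 2 * t ^ 2)
  set f' : Fin m ⊕ Fin n → ℝ → ℝ :=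
    Sum.elim (fun k t => ωs⁻¹ * γ k * sin t) (fun i t => J i * t)
  have hVf : V = fun x => ∑ a, f a (x a) := by
    ext x
    simp only [hV, f, Fintype.sum_sum_type, Sum.elim_inl, Sum.elim_inr, Finset.mul_sum]
    rw [sub_eq_add_neg, add_comm, ← Finset.sum_neg_distrib]
    congr 1 <;> exact Finset.sum_congr rfl fun _ _ => by ring
  have hf : ∀ a t, HasDerivAt (f a) (f' a t) t := by
    rintro (k | i) t
    · simpa [f, f'] using (hasDerivAt_cos t).neg.const_mul (ωs⁻¹ * γ k)
    · exact ((hasDerivAt_pow 2 t).const_mul (J i / 2)).congr_deriv (by simp [f']; ring)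
  have hf' : ∀ a, HasDerivAt (f' a) (Sum.elim (fun k => ωs⁻¹ * γ k * cos (ηs k)) J a)
      (Sum.elim ηs (fun _ => ωs) a) := by
    rintro (k | i)
    · simpa [f'] using (hasDerivAt_sin (ηs k)).const_mul (ωs⁻¹ * γ k)
    · simpa [f'] using (hasDerivAt_id ωs).const_mul (J i)
  have hconvex : ∀ a, StrictConvexOn ℝ
      (Sum.elim (fun _ => Set.Icc (-(π / 2)) (π / 2)) (fun _ => Set.univ) a) (f a) := by
    rintro (k | i)
    · exact strictConcaveOn_cos_Icc.neg.const_mul (mul_pos (inv_pos.2 hωs) (hγ k))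
    · exact (Even.strictConvexOn_pow even_two two_ne_zero).const_mul (half_pos (hJ i))
  subst hVf
  refine ⟨?_, by simp [hVs], ?_⟩
  · rw [hessian_sum_comp_apply hf hf', Matrix.posDef_diagonal_iff]
    rintro (k | i)
    · exact mul_pos (mul_pos (inv_pos.2 hωs) (hγ k)) (cos_pos_of_mem_Ioo (hηs k))
    · exact hJ i
  · simp only [hVs, bregman_sum_comp_apply fun a => hf a _]
    refine eventually_pos_sum_bregman hconvex ?_ fun a => hf a _
    rintro (k | i)
    · exact Icc_mem_nhds (hηs k).1 (hηs k).2
    · exact univ_mem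
end

section
/- Let B ∈ ℝ^{n×m} be the incidence matrix of a connected graph, Γ = diag(γ_k) with γ_k > 0, and η, η_s ∈ im Bᵀ ∩ (−π/2, π/2)^m. If BΓ(sin η − sin η_s) = 0, then η = η_s. -/
/-!
Write `η = Bᵀθ` and `ηs = Bᵀθs`. Then `η - ηs` lies in the range of `Bᵀ`, which is orthogonal to
the kernel of `B`, so `∑ₖ γₖ (ηₖ - ηsₖ)(sin ηₖ - sin ηsₖ) = 0`. Since `sin` is strictly increasing
on `[-π/2, π/2]`, every summand is positive unless `ηₖ = ηsₖ`.
-/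

open Matrix

theorem Matrix.dotProduct_eq_zero_of_mem_range_transpose_mulVec {ι κ R : Type*} [Fintype ι]
    [Fintype κ] [CommSemiring R] {A : Matrix ι κ R} {x v : κ → R}
    (hx : x ∈ Set.range Aᵀ.mulVec) (hv : A *ᵥ v = 0) : x ⬝ᵥ v = 0 := by
  obtain ⟨θ, rfl⟩ := hx
  rw [mulVec_transpose, ← dotProduct_mulVec, hv, dotProduct_zero]

section StrictMonoOn

variable {R : Type*} [CommRing R] [LinearOrder R] [IsStrictOrderedRing R] {f : R → R} {s : Set R}

theorem StrictMonoOn.sub_mul_sub_pos (hf : StrictMonoOn f s) {a b : R} (ha : a ∈ s)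
    (hb : b ∈ s) (hab : a ≠ b) : 0 < (a - b) * (f a - f b) := by
  rcases hab.lt_or_gt with h | h
  · exact mul_pos_of_neg_of_neg (sub_neg.2 h) (sub_neg.2 (hf ha hb h))
  · exact mul_pos (sub_pos.2 h) (sub_pos.2 (hf hb ha h))

theorem StrictMonoOn.eq_of_dotProduct_weighted_sub_eq_zero {ι : Type*} [Fintype ι]
    (hf : StrictMonoOn f s) {γ x y : ι → R} (hγ : ∀ k, 0 < γ k) (hx : ∀ k, x k ∈ s)
    (hy : ∀ k, y k ∈ s) (h : (x - y) ⬝ᵥ (fun k => γ k * (f (x k) - f (y k))) = 0) :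
    x = y := by
  have hterm_pos : ∀ k, x k ≠ y k → 0 < (x - y) k * (γ k * (f (x k) - f (y k))) :=
    fun k hk => by
      rw [mul_left_comm]
      exact mul_pos (hγ k) (hf.sub_mul_sub_pos (hx k) (hy k) hk)
  have hterm_nonneg : ∀ k, 0 ≤ (x - y) k * (γ k * (f (x k) - f (y k))) := fun k => by
    rcases eq_or_ne (x k) (y k) with hk | hk
    · simp [hk]
    · exact (hterm_pos k hk).le
  funext k
  by_contra hk
  exact (hterm_pos k hk).ne'
    ((Finset.sum_eq_zero_iff_of_nonneg fun k _ => hterm_nonneg k).1 h k (Finset.mem_univ k))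

end StrictMonoOn

open Real in
theorem stmt7_general {n m : ℕ}
    (B : Matrix (Fin n) (Fin m) ℝ)
    (γ : Fin m → ℝ) (hγ : ∀ k, 0 < γ k)
    (η ηs : Fin m → ℝ)
    (hη : η ∈ Set.range B.transpose.mulVec)
    (hηs : ηs ∈ Set.range B.transpose.mulVec)
    (hηbox : ∀ k, η k ∈ Set.Ioo (-(π / 2)) (π / 2))
    (hηsbox : ∀ k, ηs k ∈ Set.Ioo (-(π / 2)) (π / 2))
    (hzero : B.mulVec (fun k => γ k * (Real.sin (η k) - Real.sin (ηs k))) = 0) :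
    η = ηs := by
  obtain ⟨θ, rfl⟩ := hη
  obtain ⟨θs, rfl⟩ := hηs
  have hdiff : Bᵀ *ᵥ θ - Bᵀ *ᵥ θs ∈ Set.range Bᵀ.mulVec := ⟨θ - θs, mulVec_sub _ _ _⟩
  exact strictMonoOn_sin.eq_of_dotProduct_weighted_sub_eq_zero hγ
    (fun k => Set.Ioo_subset_Icc_self (hηbox k)) (fun k => Set.Ioo_subset_Icc_self (hηsbox k))
    (dotProduct_eq_zero_of_mem_range_transpose_mulVec hdiff hzero)

open Real in
/-- If B is the incidence matrix of a connected graph, Γ = diag(γ) > 0,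
η, η_s ∈ im Bᵀ ∩ (−π/2, π/2)^m, and BΓ(sin η − sin η_s) = 0, then η = η_s. -/
theorem stmt7 {n m : ℕ} (E : Fin m → Fin n × Fin n)
    (hloop : ∀ e, (E e).1 ≠ (E e).2)
    (G : SimpleGraph (Fin n))
    (hGadj : ∀ i j, G.Adj i j ↔ i ≠ j ∧ ∃ e, E e = (i, j) ∨ E e = (j, i))
    (hconn : G.Connected)
    (B : Matrix (Fin n) (Fin m) ℝ)
    (hBdef : ∀ i e, B i e =
      if i = (E e).1 then 1 else if i = (E e).2 then -1 else 0)
    (γ : Fin m → ℝ) (hγ : ∀ k, 0 < γ k)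
    (η ηs : Fin m → ℝ)
    (hη : η ∈ Set.range B.transpose.mulVec)
    (hηs : ηs ∈ Set.range B.transpose.mulVec)
    (hηbox : ∀ k, η k ∈ Set.Ioo (-(π / 2)) (π / 2))
    (hηsbox : ∀ k, ηs k ∈ Set.Ioo (-(π / 2)) (π / 2))
    (hzero : B.mulVec (fun k => γ k * (Real.sin (η k) - Real.sin (ηs k))) = 0) :
    η = ηs :=
  stmt7_general B γ hγ η ηs hη hηs hηbox hηsbox hzero
end

section
/- Consider the closed-loop network η̇ = Bᵀω, J ω̇ = [ω]⁻¹(Q⁻¹ξ − P_ℓ − BΓ sin η) − D(ω − 𝟙ω*), ξ̇ = −𝓛ξ − Q⁻¹[ω]⁻¹(ω − 𝟙ω*), with B the incidence matrix of a connected physical graph, 𝓛 the Laplacian of a connected undirected communication graph, J, D, Q, Γ diagonal positive, and ω restricted to ℝ_{>0}ⁿ. Then (η̄, ω̄, ξ̄) is an equilibrium if and only if ω̄ = 𝟙ω*, ξ̄ = 𝟙(𝟙ᵀP_ℓ)/(𝟙ᵀQ⁻¹𝟙), and Q⁻¹ξ̄ − P_ℓ − BΓ sin η̄ = 0. -/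
/-!
At an equilibrium, `Bᵀω = 0` forces the frequencies to synchronize, `ω = c𝟙`. Summing the
`ξ`-equation kills the Laplacian term (`𝟙ᵀ𝓛 = 0`) and leaves `(𝟙ᵀQ⁻¹𝟙)(c - ω*)/c = 0`, so
`c = ω*`. Then `𝓛ξ = 0`, so `ξ = d𝟙`, and the swing equation says the power imbalance vanishes
at every bus; summing it (`𝟙ᵀB = 0`) pins down `d`.
-/

open Matrix Finset

section

variable {ι κ R : Type*}

theorem Matrix.sum_mulVec_eq_zero [Fintype ι] [Fintype κ] [Semiring R] {A : Matrix ι κ R}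
    (hA : 1 ᵥ* A = 0) (v : κ → R) : ∑ i, (A *ᵥ v) i = 0 := by
  rw [← one_dotProduct, dotProduct_mulVec, hA, zero_dotProduct]

theorem Matrix.one_vecMul_eq_zero_of_sum_eq_zero [Fintype ι] [NonAssocSemiring R]
    {A : Matrix ι κ R} (hA : ∀ j, ∑ i, A i j = 0) : 1 ᵥ* A = 0 :=
  funext fun j => by simp [vecMul, dotProduct, hA]

theorem Matrix.IsSymm.one_vecMul_eq_zero [Fintype ι] [CommSemiring R] {L : Matrix ι ι R}
    (hL : L.IsSymm) (hL1 : L *ᵥ 1 = 0) : 1 ᵥ* L = 0 := by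
  rw [← mulVec_transpose, hL.eq, hL1]

theorem Matrix.mulVec_const_eq_zero [Fintype κ] [CommSemiring R] {A : Matrix ι κ R}
    (hA : A *ᵥ 1 = 0) (c : R) : A *ᵥ (fun _ => c) = 0 := by
  rw [show (fun _ => c : κ → R) = c • 1 from funext fun _ => (mul_one c).symm, mulVec_smul, hA,
    smul_zero]

theorem eq_div_sum_of_sum_mul_eq {K : Type*} [Field K] [LinearOrder K] [IsStrictOrderedRing K]
    [Fintype ι] [Nonempty ι] {w : ι → K} (hw : ∀ i, 0 < w i) {x y : K} (h : ∑ i, w i * x = y) :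
    x = y / ∑ i, w i := by
  rw [← sum_mul, mul_comm] at h
  exact eq_div_of_mul_eq (sum_pos (fun i _ => hw i) univ_nonempty).ne' h

theorem synchronous_frequency_eq_nominal [Fintype ι] [Nonempty ι] {L : Matrix ι ι ℝ}
    (hL : 1 ᵥ* L = 0) {q ξ : ι → ℝ} (hq : ∀ i, 0 < q i) {c ωstar : ℝ} (hc : c ≠ 0)
    (hcons : ∀ i, -(L *ᵥ ξ) i - (q i)⁻¹ * (c - ωstar) / c = 0) : c = ωstar := by
  have hsum : ∑ i, (q i)⁻¹ * ((c - ωstar) / c) = 0 := by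
    rw [← neg_eq_zero, ← sum_mulVec_eq_zero hL ξ, ← sum_neg_distrib]
    exact sum_congr rfl fun i _ => by linarith [hcons i, mul_div_assoc (q i)⁻¹ (c - ωstar) c]
  simpa [sub_eq_zero, hc] using eq_div_sum_of_sum_mul_eq (fun i => inv_pos.2 (hq i)) hsum

theorem consensus_value_eq_of_power_balance [Fintype ι] [Fintype κ] [Nonempty ι]
    {B : Matrix ι κ ℝ} (hB : 1 ᵥ* B = 0) {q Pl : ι → ℝ} (hq : ∀ i, 0 < q i) {d : ℝ}
    {s : κ → ℝ} (hbalance : ∀ i, (q i)⁻¹ * d - Pl i - (B *ᵥ s) i = 0) :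
    d = (∑ i, Pl i) / ∑ i, (q i)⁻¹ := by
  refine eq_div_sum_of_sum_mul_eq (fun i => inv_pos.2 (hq i)) ?_
  have := sum_eq_zero fun i (_ : i ∈ univ) => hbalance i
  rwa [sum_sub_distrib, sum_sub_distrib, sum_mulVec_eq_zero hB, sub_zero, sub_eq_zero] at this

end

theorem stmt11_general {n m : ℕ}
    (B : Matrix (Fin n) (Fin m) ℝ) (hB1 : ∀ e, ∑ i, B i e = 0)
    (hBker : ∀ v : Fin n → ℝ, (∀ e, (B.transpose.mulVec v) e = 0) → ∃ c, v = fun _ => c)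
    (L : Matrix (Fin n) (Fin n) ℝ) (hLsym : L.IsSymm)
    (hL1 : L.mulVec (fun _ => 1) = 0)
    (hLker : ∀ v : Fin n → ℝ, L.mulVec v = 0 → ∃ c, v = fun _ => c)
    (Dm q : Fin n → ℝ) (γ : Fin m → ℝ)
    (hq : ∀ i, 0 < q i)
    (Pl : Fin n → ℝ) (ωstar : ℝ)
    (η : Fin m → ℝ) (ω ξ : Fin n → ℝ) (hωpos : ∀ i, 0 < ω i) :
    ((∀ e, (B.transpose.mulVec ω) e = 0) ∧
     (∀ i, ((q i)⁻¹ * ξ i - Pl i - (B.mulVec fun k => γ k * Real.sin (η k)) i) / ω i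
        - Dm i * (ω i - ωstar) = 0) ∧
     (∀ i, -(L.mulVec ξ) i - (q i)⁻¹ * (ω i - ωstar) / ω i = 0))
    ↔ ((ω = fun _ => ωstar) ∧
       (ξ = fun _ => (∑ i, Pl i) / (∑ i, (q i)⁻¹)) ∧
       (∀ i, (q i)⁻¹ * ξ i - Pl i - (B.mulVec fun k => γ k * Real.sin (η k)) i = 0)) := by
  rcases isEmpty_or_nonempty (Fin n) with _ | _
  · exact iff_of_true ⟨fun e => by simp [mulVec, dotProduct], isEmptyElim, isEmptyElim⟩
      ⟨Subsingleton.elim _ _, Subsingleton.elim _ _, isEmptyElim⟩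
  constructor
  · rintro ⟨hflow, hswing, hcons⟩
    obtain ⟨c, rfl⟩ := hBker ω hflow
    obtain rfl : c = ωstar := synchronous_frequency_eq_nominal (hLsym.one_vecMul_eq_zero hL1) hq
      (hωpos (Classical.arbitrary _)).ne' hcons
    obtain ⟨d, rfl⟩ := hLker ξ (funext fun i => by simpa using hcons i)
    have hbalance : ∀ i, (q i)⁻¹ * d - Pl i - (B *ᵥ fun k => γ k * Real.sin (η k)) i = 0 :=
      fun i => by simpa [(hωpos i).ne'] using hswing i
    exact ⟨rfl, by rw [← consensus_value_eq_of_power_balance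
      (one_vecMul_eq_zero_of_sum_eq_zero hB1) hq hbalance], hbalance⟩
  · rintro ⟨rfl, rfl, hbalance⟩
    have hflow : Bᵀ *ᵥ 1 = 0 := by
      rw [mulVec_transpose, one_vecMul_eq_zero_of_sum_eq_zero hB1]
    exact ⟨by simp [mulVec_const_eq_zero hflow], fun i => by simp [hbalance i],
      fun i => by simp [mulVec_const_eq_zero hL1]⟩

/-- (η̄, ω̄, ξ̄) (with ω̄ ∈ ℝ_{>0}ⁿ) is an equilibrium of the closed-loop network
η̇ = Bᵀω, J ω̇ = [ω]⁻¹(Q⁻¹ξ − Pℓ − BΓ sin η) − D(ω − 𝟙ω*), ξ̇ = −𝓛ξ − Q⁻¹[ω]⁻¹(ω − 𝟙ω*)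
iff ω̄ = 𝟙ω*, ξ̄ = 𝟙(𝟙ᵀPℓ)/(𝟙ᵀQ⁻¹𝟙), and Q⁻¹ξ̄ − Pℓ − BΓ sin η̄ = 0. -/
theorem stmt11 {n m : ℕ} (hn : 0 < n)
    (B : Matrix (Fin n) (Fin m) ℝ) (hB1 : ∀ e, ∑ i, B i e = 0)
    (hBker : ∀ v : Fin n → ℝ, (∀ e, (B.transpose.mulVec v) e = 0) → ∃ c, v = fun _ => c)
    (L : Matrix (Fin n) (Fin n) ℝ) (hLsym : L.IsSymm)
    (hL1 : L.mulVec (fun _ => 1) = 0)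
    (hLker : ∀ v : Fin n → ℝ, L.mulVec v = 0 → ∃ c, v = fun _ => c)
    (Jm Dm q : Fin n → ℝ) (γ : Fin m → ℝ)
    (hJ : ∀ i, 0 < Jm i) (hD : ∀ i, 0 < Dm i) (hq : ∀ i, 0 < q i) (hγ : ∀ k, 0 < γ k)
    (Pl : Fin n → ℝ) (ωstar : ℝ) (hωstar : 0 < ωstar)
    (η : Fin m → ℝ) (ω ξ : Fin n → ℝ) (hωpos : ∀ i, 0 < ω i) :
    ((∀ e, (B.transpose.mulVec ω) e = 0) ∧
     (∀ i, ((q i)⁻¹ * ξ i - Pl i - (B.mulVec fun k => γ k * Real.sin (η k)) i) / ω i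
        - Dm i * (ω i - ωstar) = 0) ∧
     (∀ i, -(L.mulVec ξ) i - (q i)⁻¹ * (ω i - ωstar) / ω i = 0))
    ↔ ((ω = fun _ => ωstar) ∧
       (ξ = fun _ => (∑ i, Pl i) / (∑ i, (q i)⁻¹)) ∧
       (∀ i, (q i)⁻¹ * ξ i - Pl i - (B.mulVec fun k => γ k * Real.sin (η k)) i = 0)) :=
  stmt11_general B hB1 hBker L hLsym hL1 hLker Dm q γ hq Pl ωstar η ω ξ hωpos
end

section
/- Consider the scalar closed-loop system J ω̇ = −D(ω − ω*) + (χ − P_ℓ)/ω, χ̇ = −(ω − ω*)/ω on ω > 0, with J, D, ω* > 0 and P_ℓ ∈ ℝ. Its unique equilibrium is (ω, χ) = (ω*, P_ℓ), and the linearization at this equilibrium has a Hurwitz system matrix, so the equilibrium is locally asymptotically stable. -/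
/-!
The equilibrium equations force `ω = ω*` (from `χ̇ = 0`) and then `χ = Pℓ` (from `ω̇ = 0`).
The Jacobian at the equilibrium is `[[-D/J, 1/(ω* J)], [-1/ω*, 0]]`, whose trace is negative and
whose determinant is positive; for a real `2 × 2` matrix this is the Routh–Hurwitz criterion,
since every eigenvalue is then a root of `μ² + pμ + q` with `p, q > 0`.
-/

open Complex Matrix

theorem Complex.re_neg_of_sq_add_mul_add_eq_zero {p q : ℝ} (hp : 0 < p) (hq : 0 < q) {μ : ℂ}
    (h : μ ^ 2 + p * μ + q = 0) : μ.re < 0 := by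
  have hre : μ.re ^ 2 - μ.im ^ 2 + p * μ.re + q = 0 := by
    simpa [pow_two] using congrArg re h
  have him : μ.im * (2 * μ.re + p) = 0 := by
    have := congrArg im h
    simp only [pow_two, add_im, mul_im, ofReal_re, ofReal_im, zero_im] at this
    linear_combination this
  rcases mul_eq_zero.mp him with him | htrace
  · nlinarith
  · linarith

theorem Matrix.mem_spectrum_fin_two_iff {K : Type*} [Field K] (A : Matrix (Fin 2) (Fin 2) K)
    (μ : K) : μ ∈ spectrum K A ↔ μ ^ 2 - A.trace * μ + A.det = 0 := by
  rw [mem_spectrum_iff_isRoot_charpoly, Polynomial.IsRoot.def, eval_charpoly, det_fin_two,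
    trace_fin_two, det_fin_two]
  simp only [sub_apply, scalar_apply, diagonal_apply_eq, ne_eq, Fin.reduceEq, not_false_eq_true,
    diagonal_apply_ne]
  constructor <;> intro h <;> linear_combination h

theorem Matrix.re_neg_of_mem_spectrum_of_trace_neg_of_det_pos (A : Matrix (Fin 2) (Fin 2) ℝ)
    (htr : A.trace < 0) (hdet : 0 < A.det) :
    ∀ μ ∈ spectrum ℂ (A.map ofReal), μ.re < 0 := by
  intro μ hμ
  rw [mem_spectrum_fin_two_iff] at hμ
  refine re_neg_of_sq_add_mul_add_eq_zero (neg_pos.mpr htr) hdet ?_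
  rw [← hμ, trace_fin_two, det_fin_two, trace_fin_two, det_fin_two]
  simp only [map_apply]
  push_cast
  ring

section SecondaryControl

variable {J D ωstar Pl : ℝ} {f1 f2 : ℝ → ℝ → ℝ}

theorem secondaryControl_equilibria (hJ : J ≠ 0) (hωstar : 0 < ωstar)
    (hf1 : ∀ ω χ, f1 ω χ = (-D * (ω - ωstar) + (χ - Pl) / ω) / J)
    (hf2 : ∀ ω χ, f2 ω χ = -(ω - ωstar) / ω) :
    {p : ℝ × ℝ | 0 < p.1 ∧ f1 p.1 p.2 = 0 ∧ f2 p.1 p.2 = 0} = {(ωstar, Pl)} := by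
  ext ⟨ω, χ⟩
  simp only [Set.mem_ofPred_eq, Set.mem_singleton_iff, Prod.mk.injEq, hf1, hf2]
  constructor
  · rintro ⟨hω, h1, h2⟩
    obtain rfl : ω = ωstar := by
      field_simp at h2
      linarith
    refine ⟨rfl, ?_⟩
    field_simp at h1
    linarith
  · rintro ⟨rfl, rfl⟩
    simp [hωstar]

theorem deriv_secondaryControl_f1_fst
    (hf1 : ∀ ω χ, f1 ω χ = (-D * (ω - ωstar) + (χ - Pl) / ω) / J) :
    deriv (fun ω => f1 ω Pl) ωstar = -D / J := by
  have h : HasDerivAt (fun ω => f1 ω Pl) (-D / J * 1) ωstar := by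
    simp only [hf1, sub_self, zero_div, add_zero, mul_div_right_comm]
    exact ((hasDerivAt_id ωstar).sub_const ωstar).const_mul (-D / J)
  simpa using h.deriv

theorem deriv_secondaryControl_f1_snd
    (hf1 : ∀ ω χ, f1 ω χ = (-D * (ω - ωstar) + (χ - Pl) / ω) / J) :
    deriv (fun χ => f1 ωstar χ) Pl = 1 / (ωstar * J) := by
  have h : HasDerivAt (fun χ => f1 ωstar χ) (1 / ωstar / J) Pl := by
    simp only [hf1, sub_self, mul_zero, zero_add]
    exact (((hasDerivAt_id Pl).sub_const Pl).div_const ωstar).div_const J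
  rw [h.deriv, div_div]

theorem deriv_secondaryControl_f2_fst (hωstar : ωstar ≠ 0)
    (hf2 : ∀ ω χ, f2 ω χ = -(ω - ωstar) / ω) :
    deriv (fun ω => f2 ω Pl) ωstar = -1 / ωstar := by
  have h : HasDerivAt (fun ω => f2 ω Pl)
      ((-1 * ωstar - -(ωstar - ωstar) * 1) / ωstar ^ 2) ωstar := by
    simp only [hf2]
    exact (((hasDerivAt_id ωstar).sub_const ωstar).neg).div (hasDerivAt_id ωstar) hωstar
  rw [h.deriv]
  field_simp
  ring

theorem deriv_secondaryControl_f2_snd (hf2 : ∀ ω χ, f2 ω χ = -(ω - ωstar) / ω) :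
    deriv (fun χ => f2 ωstar χ) Pl = 0 := by
  simp [hf2]

end SecondaryControl

/-- The scalar secondary-control closed loop J ω̇ = −D(ω − ω*) + (χ − Pℓ)/ω,
χ̇ = −(ω − ω*)/ω on ω > 0 has unique equilibrium (ω*, Pℓ), and the linearization there
(the Jacobian matrix A) is Hurwitz (all eigenvalues have negative real part), so the
equilibrium is locally asymptotically stable. -/
theorem stmt17 (J D ωstar Pl : ℝ) (hJ : 0 < J) (hD : 0 < D) (hωstar : 0 < ωstar)
    (f1 f2 : ℝ → ℝ → ℝ)
    (hf1 : ∀ ω χ, f1 ω χ = (-D * (ω - ωstar) + (χ - Pl) / ω) / J)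
    (hf2 : ∀ ω χ, f2 ω χ = -(ω - ωstar) / ω)
    (A : Matrix (Fin 2) (Fin 2) ℝ)
    (hA : A = !![deriv (fun ω => f1 ω Pl) ωstar, deriv (fun χ => f1 ωstar χ) Pl;
                 deriv (fun ω => f2 ω Pl) ωstar, deriv (fun χ => f2 ωstar χ) Pl]) :
    {p : ℝ × ℝ | 0 < p.1 ∧ f1 p.1 p.2 = 0 ∧ f2 p.1 p.2 = 0} = {(ωstar, Pl)} ∧
    ∀ μ ∈ spectrum ℂ (A.map Complex.ofReal), μ.re < 0 := by
  refine ⟨secondaryControl_equilibria hJ.ne' hωstar hf1 hf2, ?_⟩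
  rw [hA, deriv_secondaryControl_f1_fst hf1, deriv_secondaryControl_f1_snd hf1,
    deriv_secondaryControl_f2_fst hωstar.ne' hf2, deriv_secondaryControl_f2_snd hf2]
  apply re_neg_of_mem_spectrum_of_trace_neg_of_det_pos
  · rw [trace_fin_two_of, add_zero, neg_div]
    exact neg_neg_of_pos (by positivity)
  · rw [det_fin_two_of, mul_zero, zero_sub, mul_div, mul_neg_one, neg_div, neg_neg]
    positivity
end
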